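/- Let N ≥ 1 and p > 1. Let E := Matrix (Fin N) (Fin N) ℝ be equipped with the Frobenius inner product ⟪ξ, η⟫ = tr(ξᵀη), and for ξ ∈ E write ξˢ := (ξ + ξᵀ)/2. Let A : E →L[ℝ] E be a continuous linear map that is symmetric (⟪Aξ, η⟫ = ⟪ξ, Aη⟫ for all ξ, η ∈ E) and satisfies ⟪Aζ, ζ⟫ ≥ 0 for every symmetric matrix ζ. Define F(ξ) := ⟪Aξˢ, ξˢ⟫^{p/2}. Then for all ξ, η ∈ E, |F(ξ) − F(η)| ≤ p · 2^{(p−1)²/p} · (F(ξ) + F(η))^{(p−1)/p} · ‖A‖^{1/2} · ‖ξ − η‖, where ‖A‖ is the operator norm of A and ‖·‖ the Frobenius norm. -/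

import Mathlib

open Matrix

attribute [local instance] Matrix.frobeniusNormedAddCommGroup Matrix.frobeniusNormedSpace

/-- The Frobenius inner product of two real square matrices: `⟪ξ, η⟫ = tr(ξᵀη)`. -/
noncomputable def finner {N : ℕ} (ξ η : Matrix (Fin N) (Fin N) ℝ) : ℝ :=
  (ξᵀ * η).trace

/-- The symmetric part `ξˢ = (ξ + ξᵀ)/2` of a square matrix. -/
noncomputable def symPart {N : ℕ} (ξ : Matrix (Fin N) (Fin N) ℝ) :
    Matrix (Fin N) (Fin N) ℝ :=
  (1 / 2 : ℝ) • (ξ + ξᵀ)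

/-- The density `F(ξ) = ⟪Aξˢ, ξˢ⟫^(p/2)` of Example 1. -/
noncomputable def Fdens {N : ℕ} (p : ℝ)
    (A : Matrix (Fin N) (Fin N) ℝ →L[ℝ] Matrix (Fin N) (Fin N) ℝ)
    (ξ : Matrix (Fin N) (Fin N) ℝ) : ℝ :=
  finner (A (symPart ξ)) (symPart ξ) ^ (p / 2)

/-! The map `q ξ = ⟪Aξˢ, ξˢ⟫^(1/2)` is the square root of the diagonal of a bilinear form that is
nonnegative on the diagonal, hence a seminorm, and `q ξ ≤ ‖A‖^(1/2) ‖ξ‖` by Cauchy–Schwarz; so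
`|q ξ - q η| ≤ q (ξ - η) ≤ ‖A‖^(1/2) ‖ξ - η‖`. Since `F = q^p`, the mean value bound
`|a^p - b^p| ≤ p max(a, b)^(p-1) |a - b| ≤ p (a^p + b^p)^((p-1)/p) |a - b|` finishes the proof,
as `2^((p-1)²/p) ≥ 1`. -/

namespace LinearMap.BilinForm

variable {M : Type*} [AddCommGroup M] [Module ℝ M] {B : LinearMap.BilinForm ℝ M}

theorem IsNonneg.apply_add_apply_sq_le (hB : B.IsNonneg) (x y : M) :
    (B x y + B y x) ^ 2 ≤ 4 * B x x * B y y := by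
  have hsymm : LinearMap.IsSymm (B + B.flip) := ⟨fun x y => by simp [add_comm]⟩
  have hnonneg : ∀ x, 0 ≤ (B + B.flip) x x := fun x => by
    simpa using add_nonneg (hB.nonneg x) (hB.nonneg x)
  have := (B + B.flip).apply_sq_le_of_symm hnonneg hsymm x y
  simp only [add_apply, flip_apply] at this
  linarith

theorem IsNonneg.sqrt_apply_add_le (hB : B.IsNonneg) (x y : M) :
    √(B (x + y) (x + y)) ≤ √(B x x) + √(B y y) := by
  have hcross : B x y + B y x ≤ 2 * (√(B x x) * √(B y y)) := by
    refine Real.le_sqrt_of_sq_le (hB.apply_add_apply_sq_le x y) |>.trans_eq ?_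
    rw [mul_assoc, Real.sqrt_mul (by norm_num), Real.sqrt_mul (hB.nonneg x)]
    norm_num
  rw [Real.sqrt_le_left (by positivity)]
  simp only [map_add, LinearMap.add_apply]
  nlinarith [Real.sq_sqrt (hB.nonneg x), Real.sq_sqrt (hB.nonneg y)]

theorem sqrt_apply_smul (B : LinearMap.BilinForm ℝ M) (a : ℝ) (x : M) :
    √(B (a • x) (a • x)) = ‖a‖ * √(B x x) := by
  simp only [map_smul, LinearMap.smul_apply, smul_eq_mul]
  rw [← mul_assoc, Real.sqrt_mul (mul_self_nonneg a), Real.sqrt_mul_self_eq_abs, Real.norm_eq_abs]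

noncomputable def IsNonneg.sqrtSeminorm (hB : B.IsNonneg) : Seminorm ℝ M :=
  Seminorm.of (fun x => √(B x x)) hB.sqrt_apply_add_le B.sqrt_apply_smul

@[simp]
theorem IsNonneg.sqrtSeminorm_apply (hB : B.IsNonneg) (x : M) :
    hB.sqrtSeminorm x = √(B x x) :=
  rfl

end LinearMap.BilinForm

section Frobenius

variable {N : ℕ}

noncomputable def finnerForm : LinearMap.BilinForm ℝ (Matrix (Fin N) (Fin N) ℝ) :=
  ((LinearMap.mul ℝ _).compr₂ (traceLinearMap (Fin N) ℝ ℝ)).comp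
    (transposeLinearEquiv (Fin N) (Fin N) ℝ ℝ).toLinearMap

@[simp]
theorem finnerForm_apply (x y : Matrix (Fin N) (Fin N) ℝ) : finnerForm x y = finner x y :=
  rfl

theorem finner_comm (x y : Matrix (Fin N) (Fin N) ℝ) : finner x y = finner y x := by
  rw [finner, finner, ← trace_transpose, transpose_mul, transpose_transpose]

theorem finner_self_eq_norm_sq (x : Matrix (Fin N) (Fin N) ℝ) : finner x x = ‖x‖ ^ 2 := by
  rw [frobenius_norm_def, ← Real.sqrt_eq_rpow, Real.sq_sqrt (by positivity), Finset.sum_comm]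
  simp only [finner, trace, diag, mul_apply, transpose_apply, Real.norm_eq_abs, Real.rpow_two,
    sq, abs_mul_abs_self]

theorem finner_le_norm_mul_norm (x y : Matrix (Fin N) (Fin N) ℝ) : finner x y ≤ ‖x‖ * ‖y‖ := by
  have hsq := (finnerForm (N := N)).apply_mul_apply_le_of_forall_zero_le
    (fun x => by simp [finner_self_eq_norm_sq]) x y
  simp only [finnerForm_apply, finner_comm y x, finner_self_eq_norm_sq] at hsq
  exact (Real.le_sqrt_of_sq_le (y := (‖x‖ * ‖y‖) ^ 2) (by nlinarith)).trans_eq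
    (Real.sqrt_sq (by positivity))

noncomputable def symPartₗ : Matrix (Fin N) (Fin N) ℝ →ₗ[ℝ] Matrix (Fin N) (Fin N) ℝ :=
  (1 / 2 : ℝ) • (LinearMap.id + (transposeLinearEquiv (Fin N) (Fin N) ℝ ℝ).toLinearMap)

theorem transpose_symPart (x : Matrix (Fin N) (Fin N) ℝ) : (symPart x)ᵀ = symPart x := by
  simp [symPart, add_comm]

theorem norm_symPart_le (x : Matrix (Fin N) (Fin N) ℝ) : ‖symPart x‖ ≤ ‖x‖ := by
  calc ‖symPart x‖ ≤ 1 / 2 * (‖x‖ + ‖xᵀ‖) := by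
        rw [symPart, norm_smul, Real.norm_of_nonneg (by norm_num)]
        gcongr
        exact norm_add_le x xᵀ
    _ = ‖x‖ := by rw [frobenius_norm_transpose]; ring

end Frobenius

section Rpow

variable {a b p : ℝ}

theorem rpow_sub_rpow_le_of_le (hb : 0 ≤ b) (hba : b ≤ a) (hp : 1 ≤ p) :
    a ^ p - b ^ p ≤ p * a ^ (p - 1) * (a - b) := by
  rcases (hb.trans hba).eq_or_lt with rfl | ha
  · simp [le_antisymm hba hb, Real.zero_rpow (by positivity : p ≠ 0)]
  -- Bernoulli's inequality for `b / a = 1 + s`.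
  have hbern := one_add_mul_self_le_rpow_one_add (s := b / a - 1)
    (by linarith [div_nonneg hb ha.le]) hp
  rw [add_sub_cancel, Real.div_rpow hb ha.le, le_div_iff₀ (by positivity)] at hbern
  have hsplit : a ^ p = a ^ (p - 1) * a := by
    rw [← Real.rpow_add_one ha.ne', sub_add_cancel]
  rw [hsplit] at hbern ⊢
  field_simp at hbern
  nlinarith [hbern]

theorem abs_rpow_sub_rpow_le (ha : 0 ≤ a) (hb : 0 ≤ b) (hp : 1 ≤ p) :
    |a ^ p - b ^ p| ≤ p * max a b ^ (p - 1) * |a - b| := by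
  wlog hba : b ≤ a generalizing a b
  · rw [abs_sub_comm, abs_sub_comm a, max_comm]
    exact this hb ha (le_of_not_ge hba)
  rw [abs_of_nonneg (sub_nonneg.2 (Real.rpow_le_rpow hb hba (by linarith))),
    abs_of_nonneg (sub_nonneg.2 hba), max_eq_left hba]
  exact rpow_sub_rpow_le_of_le hb hba hp

theorem max_rpow_le_rpow_add (ha : 0 ≤ a) (hb : 0 ≤ b) (hp : 1 < p) :
    max a b ^ (p - 1) ≤ (a ^ p + b ^ p) ^ ((p - 1) / p) := by
  have hmax : 0 ≤ max a b := le_max_of_le_left ha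
  calc max a b ^ (p - 1) = (max a b ^ p) ^ ((p - 1) / p) := by
        rw [← Real.rpow_mul hmax, mul_div_cancel₀ _ (by positivity)]
    _ ≤ (a ^ p + b ^ p) ^ ((p - 1) / p) := by
        gcongr
        rcases max_cases a b with ⟨h, _⟩ | ⟨h, _⟩ <;> rw [h] <;> linarith
          [Real.rpow_nonneg ha p, Real.rpow_nonneg hb p]

theorem abs_rpow_sub_rpow_le_mul_rpow_add (ha : 0 ≤ a) (hb : 0 ≤ b) (hp : 1 < p) :
    |a ^ p - b ^ p| ≤ p * (a ^ p + b ^ p) ^ ((p - 1) / p) * |a - b| :=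
  (abs_rpow_sub_rpow_le ha hb hp.le).trans (by gcongr; exact max_rpow_le_rpow_add ha hb hp)

end Rpow

/- Instance search does not find the operator norm by itself: the continuous linear maps carry
the product topology of matrices, which is only defeq to the Frobenius one. -/
noncomputable abbrev opNormedAddCommGroup {N : ℕ} :
    NormedAddCommGroup (Matrix (Fin N) (Fin N) ℝ →L[ℝ] Matrix (Fin N) (Fin N) ℝ) :=
  ContinuousLinearMap.toNormedAddCommGroup

attribute [local instance] opNormedAddCommGroup

section Density

variable {N : ℕ} (A : Matrix (Fin N) (Fin N) ℝ →L[ℝ] Matrix (Fin N) (Fin N) ℝ)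

noncomputable def densityForm : LinearMap.BilinForm ℝ (Matrix (Fin N) (Fin N) ℝ) :=
  finnerForm.compl₁₂ ((A : Matrix (Fin N) (Fin N) ℝ →ₗ[ℝ] _) ∘ₗ symPartₗ) symPartₗ

theorem densityForm_isNonneg
    (hApos : ∀ ζ : Matrix (Fin N) (Fin N) ℝ, ζᵀ = ζ → 0 ≤ finner (A ζ) ζ) :
    (densityForm A).IsNonneg :=
  ⟨fun ξ => hApos _ (transpose_symPart ξ)⟩

theorem densityForm_apply_self_le (ξ : Matrix (Fin N) (Fin N) ℝ) :
    densityForm A ξ ξ ≤ ‖A‖ * ‖ξ‖ ^ 2 :=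
  calc finner (A (symPart ξ)) (symPart ξ) ≤ ‖A (symPart ξ)‖ * ‖symPart ξ‖ :=
        finner_le_norm_mul_norm _ _
    _ ≤ ‖A‖ * ‖symPart ξ‖ * ‖symPart ξ‖ := by gcongr; exact A.le_opNorm _
    _ ≤ ‖A‖ * ‖ξ‖ ^ 2 := by rw [mul_assoc, ← sq]; gcongr; exact norm_symPart_le ξ

variable {A}

theorem sqrtSeminorm_densityForm_le (hA : (densityForm A).IsNonneg)
    (ξ : Matrix (Fin N) (Fin N) ℝ) : hA.sqrtSeminorm ξ ≤ ‖A‖ ^ (1 / 2 : ℝ) * ‖ξ‖ := by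
  rw [LinearMap.BilinForm.IsNonneg.sqrtSeminorm_apply, ← Real.sqrt_eq_rpow,
    ← Real.sqrt_sq (norm_nonneg ξ), ← Real.sqrt_mul (norm_nonneg A)]
  exact Real.sqrt_le_sqrt (densityForm_apply_self_le A ξ)

theorem Fdens_eq_sqrtSeminorm_rpow (hA : (densityForm A).IsNonneg) (p : ℝ)
    (ξ : Matrix (Fin N) (Fin N) ℝ) : Fdens p A ξ = hA.sqrtSeminorm ξ ^ p := by
  rw [LinearMap.BilinForm.IsNonneg.sqrtSeminorm_apply, Real.sqrt_eq_rpow,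
    ← Real.rpow_mul (hA.nonneg ξ), one_div_mul_eq_div]
  rfl

end Density

theorem example1_lipschitz_estimate_general {N : ℕ} (p : ℝ) (hp : 1 < p)
    (A : Matrix (Fin N) (Fin N) ℝ →L[ℝ] Matrix (Fin N) (Fin N) ℝ)
    (hApos : ∀ ζ : Matrix (Fin N) (Fin N) ℝ, ζᵀ = ζ → 0 ≤ finner (A ζ) ζ) :
    ∀ ξ η : Matrix (Fin N) (Fin N) ℝ,
      |Fdens p A ξ - Fdens p A η| ≤
        p * (2 : ℝ) ^ ((p - 1) ^ 2 / p) * (Fdens p A ξ + Fdens p A η) ^ ((p - 1) / p) *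
          (@norm _ ContinuousLinearMap.hasOpNorm A) ^ ((1 : ℝ) / 2) * ‖ξ - η‖ := by
  intro ξ η
  -- read `‖A‖` through `opNormedAddCommGroup`
  change _ ≤ _ * ‖A‖ ^ (1 / 2 : ℝ) * _
  have hA := densityForm_isNonneg A hApos
  simp only [Fdens_eq_sqrtSeminorm_rpow hA]
  set q := hA.sqrtSeminorm
  have hq : |q ξ - q η| ≤ ‖A‖ ^ (1 / 2 : ℝ) * ‖ξ - η‖ :=
    (abs_sub_map_le_sub q ξ η).trans (sqrtSeminorm_densityForm_le hA _)
  have htwo : (1 : ℝ) ≤ 2 ^ ((p - 1) ^ 2 / p) :=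
    Real.one_le_rpow one_le_two (by positivity)
  calc |q ξ ^ p - q η ^ p| ≤ p * (q ξ ^ p + q η ^ p) ^ ((p - 1) / p) * |q ξ - q η| :=
        abs_rpow_sub_rpow_le_mul_rpow_add (apply_nonneg q ξ) (apply_nonneg q η) hp
    _ ≤ 1 * (p * (q ξ ^ p + q η ^ p) ^ ((p - 1) / p) * (‖A‖ ^ (1 / 2 : ℝ) * ‖ξ - η‖)) := by
        rw [one_mul]; gcongr
    _ ≤ 2 ^ ((p - 1) ^ 2 / p) *
          (p * (q ξ ^ p + q η ^ p) ^ ((p - 1) / p) * (‖A‖ ^ (1 / 2 : ℝ) * ‖ξ - η‖)) := by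
        gcongr
    _ = _ := by ring

/-- The verification, in Example 1, that `F(ξ) = (Aξˢ : ξˢ)^(p/2)` satisfies the
Lipschitz condition (2.5) with `h = 0` and `a = ‖A‖^(p/2)`. Here `‖A‖` is the
operator norm of `A` with respect to the Frobenius norm, and `‖ξ - η‖` is the
Frobenius norm. -/
theorem example1_lipschitz_estimate {N : ℕ} (hN : 1 ≤ N) (p : ℝ) (hp : 1 < p)
    (A : Matrix (Fin N) (Fin N) ℝ →L[ℝ] Matrix (Fin N) (Fin N) ℝ)
    (hAsymm : ∀ ξ η : Matrix (Fin N) (Fin N) ℝ, finner (A ξ) η = finner ξ (A η))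
    (hApos : ∀ ζ : Matrix (Fin N) (Fin N) ℝ, ζᵀ = ζ → 0 ≤ finner (A ζ) ζ) :
    ∀ ξ η : Matrix (Fin N) (Fin N) ℝ,
      |Fdens p A ξ - Fdens p A η| ≤
        p * (2 : ℝ) ^ ((p - 1) ^ 2 / p) * (Fdens p A ξ + Fdens p A η) ^ ((p - 1) / p) *
          (@norm _ ContinuousLinearMap.hasOpNorm A) ^ ((1 : ℝ) / 2) * ‖ξ - η‖ :=
  example1_lipschitz_estimate_general p hp A hApos
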